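/- arXiv:0706.2293 — 2 statements merged into one kernel-verified Lean document; each statement's English description precedes it below -/
import Mathlib

section
/- Let ω : ℝ≥0 × (ℝ≥0)^n → ℝ≥0 be weakly monotone with the subterm property, and suppose ω ∈ Max-Poly{ℝ≥0}. If a loop executed from initial attribute values x̄^0 runs for k steps where k ≤ max_i(x^0_i), and each step satisfies ω(T+1, x̄^t) ≥ ω(T, x̄^{t+1}) for all T ≥ 0, then there is a polynomial Q (depending only on ω) such that every coordinate of every iterate x̄^t (t ≤ k) is bounded by Q(max_i x^0_i, 1). -/
open scoped NNReal

/-- Max-Poly{ℝ≥0}: the smallest class of functions (ℝ≥0)^n → ℝ≥0 containing constants,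
projections, max, +, ×, and closed under composition. -/
inductive MaxPoly : {n : ℕ} → ((Fin n → ℝ≥0) → ℝ≥0) → Prop
  | const {n : ℕ} (c : ℝ≥0) : MaxPoly (fun _ : Fin n → ℝ≥0 => c)
  | proj {n : ℕ} (i : Fin n) : MaxPoly (fun x => x i)
  | max {n : ℕ} {f g : (Fin n → ℝ≥0) → ℝ≥0} :
      MaxPoly f → MaxPoly g → MaxPoly (fun x => Max.max (f x) (g x))
  | add {n : ℕ} {f g : (Fin n → ℝ≥0) → ℝ≥0} :
      MaxPoly f → MaxPoly g → MaxPoly (fun x => f x + g x)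
  | mul {n : ℕ} {f g : (Fin n → ℝ≥0) → ℝ≥0} :
      MaxPoly f → MaxPoly g → MaxPoly (fun x => f x * g x)
  | comp {n m : ℕ} {f : (Fin m → ℝ≥0) → ℝ≥0} {g : Fin m → (Fin n → ℝ≥0) → ℝ≥0} :
      MaxPoly f → (∀ i, MaxPoly (g i)) → MaxPoly (fun x => f (fun i => g i x))

/-- Every Max-Poly function is polynomially bounded. -/
theorem mp_bound {n : ℕ} {f : (Fin n → ℝ≥0) → ℝ≥0} (hf : MaxPoly f) :
    ∃ (c : ℝ≥0) (d : ℕ), ∀ x, f x ≤ c * (Finset.univ.sup x ⊔ 1) ^ d := by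
  induction hf with
  | const c => exact ⟨c, 0, fun x => by simp⟩
  | proj i =>
      refine ⟨1, 1, fun x => ?_⟩
      simp only [one_mul, pow_one]
      exact le_trans (Finset.le_sup (f := x) (Finset.mem_univ i)) le_sup_left
  | max h1 h2 ih1 ih2 =>
      obtain ⟨c1, d1, hb1⟩ := ih1
      obtain ⟨c2, d2, hb2⟩ := ih2
      refine ⟨c1 + c2, Max.max d1 d2, fun x => ?_⟩
      have hs : (1 : ℝ≥0) ≤ Finset.univ.sup x ⊔ 1 := le_sup_right
      have p1 : (Finset.univ.sup x ⊔ 1) ^ d1 ≤ (Finset.univ.sup x ⊔ 1) ^ (Max.max d1 d2) :=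
        pow_le_pow_right₀ hs (le_max_left _ _)
      have p2 : (Finset.univ.sup x ⊔ 1) ^ d2 ≤ (Finset.univ.sup x ⊔ 1) ^ (Max.max d1 d2) :=
        pow_le_pow_right₀ hs (le_max_right _ _)
      rw [add_mul]
      exact max_le (le_trans (hb1 x) (le_trans (mul_le_mul_right p1 _) le_self_add))
        (le_trans (hb2 x) (le_trans (mul_le_mul_right p2 _) le_add_self))
  | add h1 h2 ih1 ih2 =>
      obtain ⟨c1, d1, hb1⟩ := ih1
      obtain ⟨c2, d2, hb2⟩ := ih2
      refine ⟨c1 + c2, Max.max d1 d2, fun x => ?_⟩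
      have hs : (1 : ℝ≥0) ≤ Finset.univ.sup x ⊔ 1 := le_sup_right
      have p1 : (Finset.univ.sup x ⊔ 1) ^ d1 ≤ (Finset.univ.sup x ⊔ 1) ^ (Max.max d1 d2) :=
        pow_le_pow_right₀ hs (le_max_left _ _)
      have p2 : (Finset.univ.sup x ⊔ 1) ^ d2 ≤ (Finset.univ.sup x ⊔ 1) ^ (Max.max d1 d2) :=
        pow_le_pow_right₀ hs (le_max_right _ _)
      rw [add_mul]
      exact add_le_add (le_trans (hb1 x) (mul_le_mul_right p1 _))
        (le_trans (hb2 x) (mul_le_mul_right p2 _))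
  | mul h1 h2 ih1 ih2 =>
      obtain ⟨c1, d1, hb1⟩ := ih1
      obtain ⟨c2, d2, hb2⟩ := ih2
      refine ⟨c1 * c2, d1 + d2, fun x => ?_⟩
      calc _ ≤ (c1 * (Finset.univ.sup x ⊔ 1) ^ d1) * (c2 * (Finset.univ.sup x ⊔ 1) ^ d2) :=
              mul_le_mul' (hb1 x) (hb2 x)
        _ = c1 * c2 * (Finset.univ.sup x ⊔ 1) ^ (d1 + d2) := by ring
  | comp h1 h2 ih1 ih2 =>
      obtain ⟨c, d, hb⟩ := ih1
      choose c' d' hb' using ih2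
      refine ⟨c * (Finset.univ.sup c' ⊔ 1) ^ d, Finset.univ.sup d' * d, fun x => ?_⟩
      set s := Finset.univ.sup x ⊔ 1 with hsdef
      have hs : (1 : ℝ≥0) ≤ s := le_sup_right
      set C := Finset.univ.sup c' ⊔ 1 with hCdef
      set D := Finset.univ.sup d' with hDdef
      have hsD : (1 : ℝ≥0) ≤ s ^ D := by simpa using pow_le_pow_left' hs D
      have hCs : (1 : ℝ≥0) ≤ C * s ^ D := one_le_mul le_sup_right hsD
      have key : ∀ i, (fun i => _) i ≤ C * s ^ D := fun i =>
        le_trans (hb' i x)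
          (mul_le_mul' (le_trans (Finset.le_sup (Finset.mem_univ i)) le_sup_left)
            (pow_le_pow_right₀ hs (Finset.le_sup (Finset.mem_univ i))))
      have hsup : Finset.univ.sup (fun i => _) ⊔ 1 ≤ C * s ^ D :=
        sup_le (Finset.sup_le fun i _ => key i) hCs
      calc _ ≤ c * (Finset.univ.sup (fun i => _) ⊔ 1) ^ d := hb _
        _ ≤ c * (C * s ^ D) ^ d := mul_le_mul_right (pow_le_pow_left' hsup d) _
        _ = c * C ^ d * s ^ (D * d) := by rw [mul_pow, pow_mul]; ring

/-- If ω is a monotone Max-Poly weight with the subterm property, then any loop running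
k ≤ maxᵢ x⁰ᵢ steps whose steps satisfy the brotherly inequality has all iterates bounded
by a polynomial Q (depending only on ω) in max(maxᵢ x⁰ᵢ, 1). -/
theorem stmt7 {n : ℕ} (ω : ℝ≥0 → (Fin n → ℝ≥0) → ℝ≥0)
    (hmono : ∀ (T T' : ℝ≥0) (x y : Fin n → ℝ≥0),
      T ≤ T' → (∀ i, x i ≤ y i) → ω T x ≤ ω T' y)
    (hsub : ∀ (T : ℝ≥0) (x : Fin n → ℝ≥0), (∀ i, x i ≤ ω T x) ∧ T ≤ ω T x)
    (hmp : MaxPoly (n := n + 1) (fun v => ω (v 0) (fun i => v i.succ))) :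
    ∃ Q : Polynomial ℝ≥0, ∀ (k : ℕ) (x : ℕ → Fin n → ℝ≥0),
      (k : ℝ≥0) ≤ Finset.univ.sup (x 0) →
      (∀ (T : ℝ≥0), ∀ t < k, ω T (x (t + 1)) ≤ ω (T + 1) (x t)) →
      ∀ t ≤ k, ∀ i, x t i ≤ Q.eval (Finset.univ.sup (x 0) ⊔ 1) := by
  obtain ⟨c, d, hb⟩ := mp_bound hmp
  refine ⟨Polynomial.C c * Polynomial.X ^ d, fun k x hk hstep t htk i => ?_⟩
  set M := Finset.univ.sup (x 0) with hM
  -- invariant: ω T (x t) ≤ ω (T + t) (x 0)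
  have inv : ∀ t ≤ k, ∀ T : ℝ≥0, ω T (x t) ≤ ω (T + t) (x 0) := by
    intro t
    induction t with
    | zero => intro _ T; simp
    | succ t ih =>
        intro ht T
        have h1 : ω T (x (t + 1)) ≤ ω (T + 1) (x t) := hstep T t ht
        have h2 : ω (T + 1) (x t) ≤ ω (T + 1 + t) (x 0) := ih (Nat.le_of_succ_le ht) (T + 1)
        have : (T + 1 + (t : ℝ≥0)) = T + ((t : ℕ) + 1 : ℕ) := by push_cast; ring
        rw [this] at h2
        exact le_trans h1 h2
  -- x t i ≤ ω t (x 0) ≤ ω M (x 0)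
  have h3 : x t i ≤ ω 0 (x t) := (hsub _ _).1 i
  have h4 : ω 0 (x t) ≤ ω (0 + (t : ℝ≥0)) (x 0) := inv t htk 0
  have htM : ((t : ℕ) : ℝ≥0) ≤ M := le_trans (by exact_mod_cast htk) hk
  have h5 : ω (0 + (t : ℝ≥0)) (x 0) ≤ ω M (x 0) :=
    hmono _ _ _ _ (by simpa using htM) (fun _ => le_refl _)
  -- now apply the polynomial bound at v = Fin.cons M (x 0)
  have h6 : ω M (x 0) ≤ c * (Finset.univ.sup (Fin.cons M (x 0) : Fin (n+1) → ℝ≥0) ⊔ 1) ^ d := by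
    have := hb (Fin.cons M (x 0))
    simpa using this
  have hsup : Finset.univ.sup (Fin.cons M (x 0) : Fin (n+1) → ℝ≥0) ⊔ 1 ≤ M ⊔ 1 := by
    refine sup_le (Finset.sup_le fun j _ => ?_) le_sup_right
    refine Fin.cases ?_ (fun j' => ?_) j
    · simp
    · simp only [Fin.cons_succ]
      exact le_trans (Finset.le_sup (Finset.mem_univ j')) le_sup_left
  have h7 : c * (Finset.univ.sup (Fin.cons M (x 0) : Fin (n+1) → ℝ≥0) ⊔ 1) ^ d
      ≤ c * (M ⊔ 1) ^ d := mul_le_mul_right (pow_le_pow_left' hsup d) c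
  have h8 : x t i ≤ c * (M ⊔ 1) ^ d :=
    le_trans h3 (le_trans h4 (le_trans h5 (le_trans h6 h7)))
  simpa using h8
end

section
/- Let f : ℕ^n → ℕ^n describe the effect of one iteration of a loop body on attribute values, and suppose there is a weakly monotone ω : ℕ × ℕ^n → ℕ with subterm property such that ω(T+1, x̄) ≥ ω(T, f(x̄)) for all T and x̄. Then for all k and all x̄, every coordinate of f^k(x̄) is at most ω(k, x̄), where f^k denotes k-fold iteration. -/
/-- Core combinatorial lemma for looped commands over ℕ: if a monotone weight ω with the
subterm property satisfies ω(T+1, x̄) ≥ ω(T, f(x̄)), then every coordinate of fᵏ(x̄) is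
at most ω(k, x̄). -/
theorem stmt15 {n : ℕ} (f : (Fin n → ℕ) → (Fin n → ℕ)) (ω : ℕ → (Fin n → ℕ) → ℕ)
    (hmono : ∀ (T T' : ℕ) (x y : Fin n → ℕ),
      T ≤ T' → (∀ i, x i ≤ y i) → ω T x ≤ ω T' y)
    (hsub : ∀ (T : ℕ) (x : Fin n → ℕ), (∀ i, x i ≤ ω T x) ∧ T ≤ ω T x)
    (hstep : ∀ (T : ℕ) (x : Fin n → ℕ), ω T (f x) ≤ ω (T + 1) x) :
    ∀ (k : ℕ) (x : Fin n → ℕ) (i : Fin n), (f^[k] x) i ≤ ω k x := by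
  intro k
  induction k with
  | zero => intro x i; exact (hsub 0 x).1 i
  | succ k ih =>
    intro x i
    rw [Function.iterate_succ_apply]
    exact le_trans (ih (f x) i) (hstep k x)
end
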